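/- arXiv:1504.00695 — 3 statements merged into one kernel-verified Lean document; each statement's English description precedes it below -/
import Mathlib

section
/- Let m be a positive integer, γ₁,…,γ_m ∈ [0,1], η > 0, c > 1, and let p ∈ [0,1] satisfy p ≥ 10c/(η²m). Let U ⊆ [m] be a random subset in which each i ∈ [m] is included independently with probability p. Define the empirical average to be (Σ_{i∈U} γ_i)/|U| if U ≠ ∅ and 1/2 if U = ∅. Then with probability at least 1 − e^{−c}, the empirical average lies within η of the true average (Σ_{i=1}^m γ_i)/m. -/
/-!
Write `P = p m`, so that `η² P ≥ 10 c`. If the empirical mean misses `γ̄ = (∑ i, γ i) / m`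
by more than `η`, then either `|U| ≤ P / 2`, or the centred sum `∑_{i ∈ U} (γ i - γ̄)` has
absolute value at least `η P / 2`. Both events are bounded by the exponential moment method,
the moment generating function factoring over the independent coordinates: with `λ = log 2`
the first has probability at most `exp (-(1 - log 2) P / 2) ≤ exp (-3c/2)`; with `λ = η`,
`exp x ≤ 1 + x + 3x²/4` on `|x| ≤ 1` and `∑ (γ i - γ̄)² ≤ m / 4`, each tail of the second has
probability at most `exp (-5 η² P / 16) ≤ exp (-3c)`. For `c > 1` these add up to at most
`exp (-c)`. When `η ≥ 1` the event is certain.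
-/

open scoped Classical BigOperators

noncomputable section

/-- Probability that a `p`-sampled subset of `[m]` (each index included independently
with probability `p`) satisfies the event `E`. -/
def sampleProb (m : ℕ) (p : ℝ) (E : Finset (Fin m) → Prop) : ℝ :=
  ∑ R ∈ Finset.univ.filter E, p ^ R.card * (1 - p) ^ (m - R.card)

open Finset Real

def sampleWeight (m : ℕ) (p : ℝ) (R : Finset (Fin m)) : ℝ :=
  p ^ R.card * (1 - p) ^ (m - R.card)

def empiricalMean {m : ℕ} (γ : Fin m → ℝ) (U : Finset (Fin m)) : ℝ :=
  if U = ∅ then 1 / 2 else (∑ i ∈ U, γ i) / U.card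

lemma exp_le_one_add_add_sq {x : ℝ} (hx : |x| ≤ 1) : exp x ≤ 1 + x + 3 / 4 * x ^ 2 := by
  have h := (abs_le.1 (Real.exp_bound hx (n := 2) (by norm_num))).2
  norm_num [sum_range_succ, Nat.factorial, sq_abs] at h
  linarith

lemma exp_neg_three_halves_mul_add_two_mul_exp_neg_three_mul_le {c : ℝ} (hc : 1 ≤ c) :
    exp (-(3 / 2 * c)) + 2 * exp (-(3 * c)) ≤ exp (-c) := by
  set x := exp (-(c / 2))
  have hpow (n : ℕ) (y : ℝ) (hy : y = n * -(c / 2)) : exp y = x ^ n := by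
    rw [hy, exp_nat_mul]
  rw [hpow 3 _ (by push_cast; ring), hpow 6 _ (by push_cast; ring), hpow 2 _ (by push_cast; ring)]
  have hx : 0 < x := exp_pos _
  have hx2 : x ^ 2 < 0.3678794412 := by
    rw [← hpow 2 (-c) (by push_cast; ring)]
    exact (exp_le_exp.2 (by linarith)).trans_lt exp_neg_one_lt_d9
  have hx1 : x ≤ 0.61 := by nlinarith
  have hx4 : x ^ 4 ≤ 0.14 := by nlinarith [sq_nonneg (x ^ 2)]
  calc x ^ 3 + 2 * x ^ 6 = x ^ 2 * (x + 2 * x ^ 4) := by ring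
    _ ≤ x ^ 2 * 1 := by gcongr; linarith
    _ = x ^ 2 := mul_one _

lemma sum_div_card_mem_Icc {ι : Type*} {γ : ι → ℝ} (hγ : ∀ i, γ i ∈ Set.Icc 0 1)
    (s : Finset ι) :
    (∑ i ∈ s, γ i) / s.card ∈ Set.Icc 0 1 := by
  refine ⟨div_nonneg (sum_nonneg fun i _ => (hγ i).1) s.card.cast_nonneg, div_le_one_of_le₀ ?_
    s.card.cast_nonneg⟩
  simpa using sum_le_card_nsmul s γ 1 fun i _ => (hγ i).2

lemma sum_eq_card_mul_mean {m : ℕ} (γ : Fin m → ℝ) :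
    ∑ j, γ j = m * ((∑ j, γ j) / m) := by
  rcases Nat.eq_zero_or_pos m with rfl | hm
  · simp
  · exact (mul_div_cancel₀ _ (by positivity)).symm

lemma sum_sub_mean_eq_zero {m : ℕ} (γ : Fin m → ℝ) :
    ∑ i, (γ i - (∑ j, γ j) / m) = 0 := by
  rw [sum_sub_distrib, sum_const, card_univ, Fintype.card_fin, nsmul_eq_mul,
    ← sum_eq_card_mul_mean, sub_self]

lemma sum_sq_sub_mean_le {m : ℕ} {γ : Fin m → ℝ} (hγ : ∀ i, γ i ∈ Set.Icc 0 1) :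
    ∑ i, (γ i - (∑ j, γ j) / m) ^ 2 ≤ m / 4 := by
  set μ := (∑ j, γ j) / m
  have hsum : ∑ j, γ j = m * μ := sum_eq_card_mul_mean γ
  calc ∑ i, (γ i - μ) ^ 2 ≤ ∑ i, (γ i - 2 * μ * γ i + μ ^ 2) :=
        sum_le_sum fun i _ => by nlinarith [(hγ i).1, (hγ i).2]
    _ = m * (μ - μ ^ 2) := by
        simp only [sum_add_distrib, sum_sub_distrib, ← mul_sum, hsum, sum_const, card_univ,
          Fintype.card_fin, nsmul_eq_mul]
        ring
    _ ≤ m / 4 := by nlinarith [sq_nonneg (μ - 1 / 2), m.cast_nonneg (α := ℝ)]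

lemma empiricalMean_mem_Icc {m : ℕ} {γ : Fin m → ℝ} (hγ : ∀ i, γ i ∈ Set.Icc 0 1)
    (U : Finset (Fin m)) : empiricalMean γ U ∈ Set.Icc 0 1 := by
  rw [empiricalMean]
  split_ifs
  · norm_num
  · exact sum_div_card_mem_Icc hγ U

lemma abs_empiricalMean_sub_le {m : ℕ} {γ : Fin m → ℝ} {U : Finset (Fin m)} {μ η s : ℝ}
    (hη : 0 ≤ η) (hs : 0 ≤ s) (hU : s < U.card)
    (hdev : |∑ i ∈ U, (γ i - μ)| ≤ η * s) :
    |empiricalMean γ U - μ| ≤ η := by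
  have hcard : (0 : ℝ) < U.card := hs.trans_lt hU
  have hne : U ≠ ∅ := by rintro rfl; simp at hcard
  rw [empiricalMean, if_neg hne, div_sub' hcard.ne', abs_div, abs_of_pos hcard,
    div_le_iff₀ hcard, ← nsmul_eq_mul, ← sum_const, ← sum_sub_distrib]
  nlinarith

section Sampling

variable {m : ℕ} {p : ℝ}

lemma sampleWeight_nonneg (hp0 : 0 ≤ p) (hp1 : p ≤ 1) (R : Finset (Fin m)) :
    0 ≤ sampleWeight m p R :=
  mul_nonneg (pow_nonneg hp0 _) (pow_nonneg (sub_nonneg.2 hp1) _)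

lemma sum_sampleWeight_mul_prod (g : Fin m → ℝ) :
    ∑ R, sampleWeight m p R * ∏ i ∈ R, g i = ∏ i, (p * g i + (1 - p)) := by
  rw [prod_add, ← powerset_univ]
  refine sum_congr rfl fun R _ => ?_
  rw [prod_mul_distrib, prod_const, prod_const, ← compl_eq_univ_sdiff, card_compl,
    Fintype.card_fin, sampleWeight]
  ring

lemma sum_sampleWeight : ∑ R, sampleWeight m p R = 1 := by
  simpa using sum_sampleWeight_mul_prod (m := m) (p := p) fun _ => 1

lemma sampleProb_not (E : Finset (Fin m) → Prop) :
    sampleProb m p (fun R => ¬ E R) = 1 - sampleProb m p E := by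
  rw [eq_sub_iff_add_eq, add_comm]
  convert (sum_filter_add_sum_filter_not univ E (sampleWeight m p)).trans sum_sampleWeight
    using 2 <;> exact sum_congr (by congr) fun _ _ => rfl

lemma sampleProb_eq_one {E : Finset (Fin m) → Prop} (h : ∀ R, E R) : sampleProb m p E = 1 := by
  rw [sampleProb, filter_true_of_mem fun R _ => h R]
  exact sum_sampleWeight

lemma sampleProb_mono (hp0 : 0 ≤ p) (hp1 : p ≤ 1) {E F : Finset (Fin m) → Prop}
    (h : ∀ R, E R → F R) : sampleProb m p E ≤ sampleProb m p F :=
  sum_le_sum_of_subset_of_nonneg (monotone_filter_right _ fun R _ => h R)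
    fun R _ _ => sampleWeight_nonneg hp0 hp1 R

lemma sampleProb_or_le (hp0 : 0 ≤ p) (hp1 : p ≤ 1) (E F : Finset (Fin m) → Prop) :
    sampleProb m p (fun R => E R ∨ F R) ≤ sampleProb m p E + sampleProb m p F := by
  simp only [sampleProb, sum_filter, ← sum_add_distrib]
  refine sum_le_sum fun R _ => ?_
  have := sampleWeight_nonneg hp0 hp1 R
  split_ifs <;> simp_all [sampleWeight]

/-- Chernoff bound: Markov's inequality applied to `exp (lam * ∑ i ∈ R, f i)`, whose expectation
factors over the independent coordinates. -/
theorem sampleProb_le_sum_le_exp (hp0 : 0 ≤ p) (hp1 : p ≤ 1) (f : Fin m → ℝ) {lam : ℝ}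
    (t : ℝ) (hlam : 0 ≤ lam) :
    sampleProb m p (fun R => t ≤ ∑ i ∈ R, f i)
      ≤ exp (p * ∑ i, (exp (lam * f i) - 1) - lam * t) := by
  have markov (R : Finset (Fin m)) (hR : t ≤ ∑ i ∈ R, f i) :
      1 ≤ (∏ i ∈ R, exp (lam * f i)) * exp (-(lam * t)) := by
    rw [← exp_sum, ← exp_add, ← mul_sum]
    exact one_le_exp (by nlinarith)
  calc sampleProb m p (fun R => t ≤ ∑ i ∈ R, f i)
      ≤ ∑ R, sampleWeight m p R * (∏ i ∈ R, exp (lam * f i)) * exp (-(lam * t)) := by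
        rw [sampleProb, sum_filter]
        refine sum_le_sum fun R _ => ?_
        have hw := sampleWeight_nonneg hp0 hp1 R
        split_ifs with hR
        · rw [mul_assoc]
          exact le_mul_of_one_le_right hw (markov R hR)
        · positivity
    _ = (∏ i, (p * exp (lam * f i) + (1 - p))) * exp (-(lam * t)) := by
        rw [← sum_mul, sum_sampleWeight_mul_prod]
    _ ≤ (∏ i, exp (p * (exp (lam * f i) - 1))) * exp (-(lam * t)) := by
        gcongr with i
        exact (add_one_le_exp _).trans_eq' (by ring)
    _ = exp (p * ∑ i, (exp (lam * f i) - 1) - lam * t) := by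
        rw [← exp_sum, ← exp_add, mul_sum, sub_eq_add_neg]

theorem sampleProb_card_le_le_exp (hp0 : 0 ≤ p) (hp1 : p ≤ 1) :
    sampleProb m p (fun R => (R.card : ℝ) ≤ p * m / 2)
      ≤ exp (-((1 - log 2) / 2 * (p * m))) := by
  have hneg_sum (R : Finset (Fin m)) (hR : (R.card : ℝ) ≤ p * m / 2) :
      -(p * m / 2) ≤ ∑ _i ∈ R, (-1 : ℝ) := by
    simpa using hR
  refine (sampleProb_mono hp0 hp1 hneg_sum).trans ?_
  refine (sampleProb_le_sum_le_exp hp0 hp1 _ _ (log_nonneg one_le_two)).trans_eq ?_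
  rw [mul_neg_one, exp_neg, exp_log two_pos]
  simp only [sum_const, card_univ, Fintype.card_fin, nsmul_eq_mul]
  ring_nf

theorem sampleProb_le_sum_le_exp_of_sum_eq_zero (hp0 : 0 ≤ p) (hp1 : p ≤ 1) {b : Fin m → ℝ}
    {lam : ℝ} (t : ℝ) (hlam : 0 ≤ lam) (hb : ∀ i, |lam * b i| ≤ 1)
    (hb0 : ∑ i, b i = 0) :
    sampleProb m p (fun R => t ≤ ∑ i ∈ R, b i)
      ≤ exp (3 / 4 * p * lam ^ 2 * ∑ i, b i ^ 2 - lam * t) := by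
  refine (sampleProb_le_sum_le_exp hp0 hp1 b t hlam).trans (exp_le_exp.2 ?_)
  have hsum : ∑ i, (exp (lam * b i) - 1) ≤ 3 / 4 * lam ^ 2 * ∑ i, b i ^ 2 :=
    calc ∑ i, (exp (lam * b i) - 1) ≤ ∑ i, (lam * b i + 3 / 4 * (lam * b i) ^ 2) :=
          sum_le_sum fun i _ => by linarith [exp_le_one_add_add_sq (hb i)]
      _ = lam * ∑ i, b i + 3 / 4 * lam ^ 2 * ∑ i, b i ^ 2 := by
          rw [sum_add_distrib, mul_sum, mul_sum]
          congr 1; exact sum_congr rfl fun i _ => by ring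
      _ = 3 / 4 * lam ^ 2 * ∑ i, b i ^ 2 := by rw [hb0]; ring
  nlinarith [mul_le_mul_of_nonneg_left hsum hp0]

theorem sampleProb_le_sum_le_exp_of_abs_le_one (hp0 : 0 ≤ p) (hp1 : p ≤ 1) {b : Fin m → ℝ}
    {η : ℝ} (hη0 : 0 ≤ η) (hη1 : η ≤ 1) (hb : ∀ i, |b i| ≤ 1) (hb0 : ∑ i, b i = 0)
    (hb2 : ∑ i, b i ^ 2 ≤ m / 4) :
    sampleProb m p (fun R => η * (p * m / 2) ≤ ∑ i ∈ R, b i)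
      ≤ exp (-(5 / 16 * η ^ 2 * (p * m))) := by
  have hηb (i : Fin m) : |η * b i| ≤ 1 := by
    rw [abs_mul, abs_of_nonneg hη0]
    nlinarith [hb i, abs_nonneg (b i)]
  refine (sampleProb_le_sum_le_exp_of_sum_eq_zero hp0 hp1 _ hη0 hηb hb0).trans
    (exp_le_exp.2 ?_)
  nlinarith [mul_le_mul_of_nonneg_left hb2 (by positivity : 0 ≤ 3 / 4 * p * η ^ 2)]

theorem sampleProb_abs_empiricalMean_sub_gt_le (hp0 : 0 ≤ p) (hp1 : p ≤ 1) {γ : Fin m → ℝ}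
    (hγ : ∀ i, γ i ∈ Set.Icc 0 1) {η : ℝ} (hη0 : 0 ≤ η) (hη1 : η ≤ 1) :
    sampleProb m p (fun U => ¬ |empiricalMean γ U - (∑ i, γ i) / m| ≤ η)
      ≤ exp (-((1 - log 2) / 2 * (p * m))) + 2 * exp (-(5 / 16 * η ^ 2 * (p * m))) := by
  set μ := (∑ i, γ i) / (m : ℝ)
  set a : Fin m → ℝ := fun i => γ i - μ
  have hμ : μ ∈ Set.Icc 0 1 := by simpa using sum_div_card_mem_Icc hγ univ
  have ha (i : Fin m) : |a i| ≤ 1 :=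
    abs_sub_le_iff.2 ⟨by linarith [(hγ i).2, hμ.1], by linarith [(hγ i).1, hμ.2]⟩
  have ha0 : ∑ i, a i = 0 := sum_sub_mean_eq_zero γ
  have ha2 : ∑ i, a i ^ 2 ≤ m / 4 := sum_sq_sub_mean_le hγ
  have hcover (U : Finset (Fin m)) (hU : ¬ |empiricalMean γ U - μ| ≤ η) :
      (U.card : ℝ) ≤ p * m / 2 ∨
        η * (p * m / 2) ≤ ∑ i ∈ U, a i ∨ η * (p * m / 2) ≤ ∑ i ∈ U, -a i := by
    by_contra! h
    obtain ⟨hcard, hpos, hneg⟩ := h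
    rw [sum_neg_distrib] at hneg
    exact hU (abs_empiricalMean_sub_le hη0 (by positivity) hcard
      (abs_le.2 ⟨by linarith, hpos.le⟩))
  calc _ ≤ _ := sampleProb_mono hp0 hp1 hcover
    _ ≤ _ := (sampleProb_or_le hp0 hp1 _ _).trans
        (add_le_add le_rfl (sampleProb_or_le hp0 hp1 _ _))
    _ ≤ _ := by
      rw [two_mul]
      gcongr
      · exact sampleProb_card_le_le_exp hp0 hp1
      · exact sampleProb_le_sum_le_exp_of_abs_le_one hp0 hp1 hη0 hη1 ha ha0 ha2
      · refine sampleProb_le_sum_le_exp_of_abs_le_one hp0 hp1 hη0 hη1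
          (fun i => (abs_neg _).trans_le (ha i)) ?_ (by simpa only [neg_sq] using ha2)
        rw [sum_neg_distrib, ha0, neg_zero]

end Sampling

/-- large deviation bound. If `γ₁,…,γ_m ∈ [0,1]`, `η > 0`, `c > 1`
and `p ≥ 10c/(η²m)`, then with probability at least `1 - e^{-c}` over a `p`-sampled
subset `U ⊆ [m]`, the empirical average `(Σ_{i∈U} γ_i)/|U|` (set to `1/2` when
`U = ∅`) lies within `η` of the true average `(Σ_i γ_i)/m`. -/
theorem stmt2 (m : ℕ) (hm : 0 < m) (γ : Fin m → ℝ)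
    (hγ : ∀ i, γ i ∈ Set.Icc (0:ℝ) 1)
    (η c p : ℝ) (hη : 0 < η) (hc : 1 < c) (hp0 : 0 ≤ p) (hp1 : p ≤ 1)
    (hp : 10 * c / (η^2 * m) ≤ p) :
    1 - Real.exp (-c) ≤ sampleProb m p (fun U =>
      |(if U = ∅ then 1/2 else (∑ i ∈ U, γ i) / (U.card : ℝ)) - (∑ i, γ i) / (m:ℝ)| ≤ η) := by
  change 1 - exp (-c) ≤ sampleProb m p (fun U => |empiricalMean γ U - (∑ i, γ i) / m| ≤ η)
  rcases le_or_gt 1 η with hη1 | hη1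
  · have hμ : (∑ i, γ i) / (m : ℝ) ∈ Set.Icc 0 1 := by
      simpa using sum_div_card_mem_Icc hγ univ
    rw [sampleProb_eq_one fun U => ?_]
    · linarith [exp_pos (-c)]
    have hU := empiricalMean_mem_Icc hγ U
    exact (abs_sub_le_of_nonneg_of_le hU.1 hU.2 hμ.1 hμ.2).trans hη1
  have hP : 10 * c ≤ η ^ 2 * (p * m) :=
    ((div_le_iff₀ (by positivity)).1 hp).trans_eq (by ring)
  have hpm : 10 * c ≤ p * m :=
    hP.trans (mul_le_of_le_one_left (by positivity) (pow_le_one₀ hη.le hη1.le))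
  have hcount : exp (-((1 - log 2) / 2 * (p * m))) ≤ exp (-(3 / 2 * c)) :=
    exp_le_exp.2 (by nlinarith [log_two_lt_d9])
  have htail : exp (-(5 / 16 * η ^ 2 * (p * m))) ≤ exp (-(3 * c)) := exp_le_exp.2 (by nlinarith)
  have hbad := sampleProb_abs_empiricalMean_sub_gt_le hp0 hp1 hγ hη.le hη1.le
  rw [sampleProb_not] at hbad
  linarith [exp_neg_three_halves_mul_add_two_mul_exp_neg_three_mul_le hc.le]
end
end

section
/- Let μ be a distribution over q-element subsets of [n] with |supp(μ)| ≤ ηn, and let 𝓜_i, 𝓒_i, 𝓢_i be the families of the inductive construction. Then for every 0 ≤ i ≤ q and every Q ∈ 𝓜_i, |Q ∩ 𝓒_i| ≤ q − i. -/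
open scoped Classical BigOperators

noncomputable section

/-- `μ` is a probability distribution over subsets of `[n]`. -/
def IsDistr {n : ℕ} (μ : Finset (Fin n) → ℝ) : Prop :=
  (∀ Q, 0 ≤ μ Q) ∧ ∑ Q : Finset (Fin n), μ Q = 1

/-- The support of a distribution over subsets of `[n]`. -/
def distSupp {n : ℕ} (μ : Finset (Fin n) → ℝ) : Finset (Finset (Fin n)) :=
  Finset.univ.filter fun Q => 0 < μ Q

/-- `μ(𝒜) = Σ_{Q ∈ 𝒜} μ(Q)`. -/
def mass {n : ℕ} (μ : Finset (Fin n) → ℝ) (A : Finset (Finset (Fin n))) : ℝ :=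
  ∑ Q ∈ A, μ Q

/-- The set of indexes `j ∈ [n]` belonging to at least `n^{max(i,1)/q}` sets of the
family `M` (threshold `n^{1/q}` for `i = 0` and `n^{i/q}` for `i ≥ 1`). -/
def coreAt (n q : ℕ) (M : Finset (Finset (Fin n))) (i : ℕ) : Finset (Fin n) :=
  Finset.univ.filter fun j =>
    (n:ℝ) ^ (((max i 1 : ℕ):ℝ)/(q:ℝ)) ≤ ((M.filter fun Q => j ∈ Q).card : ℝ)

/-- The sets `Q ∈ M` with `|Q ∩ coreAt n q M i| = q - i`. -/
def matchAt (n q : ℕ) (M : Finset (Finset (Fin n))) (i : ℕ) : Finset (Finset (Fin n)) :=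
  M.filter fun Q => (Q ∩ coreAt n q M i).card = q - i

/-- The families `𝓜_i` of the inductive construction: `𝓜₀ = supp(μ)` and
`𝓜_i = 𝓜_{i-1} ∖ 𝓢_{i-1}`. -/
def Mfam (n q : ℕ) (μ : Finset (Fin n) → ℝ) : ℕ → Finset (Finset (Fin n))
  | 0 => distSupp μ
  | i+1 => Mfam n q μ i \ matchAt n q (Mfam n q μ i) i

/-- The cores `𝓒_i` of the inductive construction. -/
def Cfam (n q : ℕ) (μ : Finset (Fin n) → ℝ) (i : ℕ) : Finset (Fin n) :=
  coreAt n q (Mfam n q μ i) i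

/-- The families `𝓢_i = {Q ∈ 𝓜_i : |Q ∩ 𝓒_i| = q - i}` of the inductive construction. -/
def Sfam (n q : ℕ) (μ : Finset (Fin n) → ℝ) (i : ℕ) : Finset (Finset (Fin n)) :=
  matchAt n q (Mfam n q μ i) i

set_option maxHeartbeats 1000000 in
/-- For every `0 ≤ i ≤ q` and every `Q ∈ 𝓜_i`, `|Q ∩ 𝓒_i| ≤ q - i`. -/
theorem stmt10 {n q : ℕ} (η : ℝ) (hq : 0 < q)
    (μ : Finset (Fin n) → ℝ) (hμ : IsDistr μ)
    (hcard : ∀ Q, 0 < μ Q → Q.card = q)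
    (hsupp : ((distSupp μ).card : ℝ) ≤ η * n) :
    ∀ i : ℕ, i ≤ q → ∀ Q ∈ Mfam n q μ i, (Q ∩ Cfam n q μ i).card ≤ q - i := by
  have hMsub : ∀ i : ℕ, Mfam n q μ i ⊆ distSupp μ := by
    intro i
    induction i with
    | zero => exact subset_rfl
    | succ k ih => exact (Finset.sdiff_subset).trans ih
  rcases Nat.eq_zero_or_pos n with hn | hn
  · subst hn
    intro i _ Q hQ
    exfalso
    have hQ0 : Q ∈ distSupp μ := hMsub i hQ
    have hc : Q.card = q := hcard Q (Finset.mem_filter.mp hQ0).2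
    have hQe : Q = ∅ := Finset.eq_empty_of_forall_notMem (fun x => x.elim0)
    rw [hQe, Finset.card_empty] at hc
    omega
  have core_mono : ∀ (i : ℕ) (M M' : Finset (Finset (Fin n))), M' ⊆ M →
      coreAt n q M' (i+1) ⊆ coreAt n q M i := by
    intro i M M' hM j hj
    simp only [coreAt, Finset.mem_filter, Finset.mem_univ, true_and] at hj ⊢
    refine le_trans (le_trans ?_ hj) ?_
    · apply Real.rpow_le_rpow_of_exponent_le (by exact_mod_cast hn)
      gcongr <;> omega
    · exact_mod_cast Finset.card_le_card (Finset.filter_subset_filter _ hM)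
  intro i
  induction i with
  | zero =>
    intro _ Q hQ
    have hc : Q.card = q := hcard Q (Finset.mem_filter.mp (hMsub 0 hQ)).2
    simpa [hc] using Finset.card_le_card (Finset.inter_subset_left (s₁ := Q) (s₂ := Cfam n q μ 0))
  | succ k ih =>
    intro hk Q hQ
    rw [show Mfam n q μ (k+1) = Mfam n q μ k \ matchAt n q (Mfam n q μ k) k from rfl] at hQ
    obtain ⟨hQk, hQnm⟩ := Finset.mem_sdiff.mp hQ
    have h1 : (Q ∩ Cfam n q μ k).card ≤ q - k := ih (Nat.le_of_succ_le hk) Q hQk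
    have h2 : (Q ∩ Cfam n q μ k).card ≠ q - k := by
      intro h
      exact hQnm (Finset.mem_filter.mpr ⟨hQk, h⟩)
    have hsub : Cfam n q μ (k+1) ⊆ Cfam n q μ k := by
      show coreAt n q (Mfam n q μ (k+1)) (k+1) ⊆ coreAt n q (Mfam n q μ k) k
      apply core_mono
      rw [show Mfam n q μ (k+1) = Mfam n q μ k \ matchAt n q (Mfam n q μ k) k from rfl]
      exact Finset.sdiff_subset
    have h3 : (Q ∩ Cfam n q μ (k+1)).card ≤ (Q ∩ Cfam n q μ k).card :=
      Finset.card_le_card (Finset.inter_subset_inter Finset.Subset.rfl hsub)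
    omega
end
end

section
/- Let μ be a distribution over q-element subsets of [n] with |supp(μ)| ≤ ηn, and let 𝓜_i, 𝓒_i, 𝓢_i be the families of the inductive construction. Then for every 1 ≤ i ≤ q and every Q ∈ 𝓢_i, (Q ∖ 𝓒_i) ∩ 𝓒_{i−1} = ∅. -/
open scoped Classical BigOperators

noncomputable section

lemma Mfam_succ_subset (n q : ℕ) (μ : Finset (Fin n) → ℝ) (i : ℕ) :
    Mfam n q μ (i+1) ⊆ Mfam n q μ i := by
  show Mfam n q μ i \ _ ⊆ _
  exact Finset.sdiff_subset

lemma Cfam_succ_subset {n q : ℕ} (hq : 0 < q) (μ : Finset (Fin n) → ℝ) (k : ℕ) :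
    Cfam n q μ (k+1) ⊆ Cfam n q μ k := by
  intro j hj
  have hn : (1:ℝ) ≤ n := by
    have := j.isLt; exact_mod_cast Nat.one_le_iff_ne_zero.2 (by omega)
  simp only [Cfam, coreAt, Finset.mem_filter, Finset.mem_univ, true_and] at hj ⊢
  have hcount : (((Mfam n q μ (k+1)).filter fun Q => j ∈ Q).card : ℝ) ≤
      (((Mfam n q μ k).filter fun Q => j ∈ Q).card : ℝ) := by
    exact_mod_cast Finset.card_le_card
      (Finset.filter_subset_filter _ (Mfam_succ_subset n q μ k))
  refine le_trans (le_trans ?_ hj) hcount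
  apply Real.rpow_le_rpow_of_exponent_le hn
  have hql : (0:ℝ) < q := by exact_mod_cast hq
  gcongr <;> first
    | omega
    | (push_cast; omega)

lemma key_bound {n q : ℕ} (hq : 0 < q) (μ : Finset (Fin n) → ℝ)
    (hcard : ∀ Q, 0 < μ Q → Q.card = q) :
    ∀ i, ∀ Q ∈ Mfam n q μ (i+1), (Q ∩ Cfam n q μ i).card ≤ q - (i+1) := by
  intro i
  induction i with
  | zero =>
    intro Q hQ
    have hQ' : Q ∈ Mfam n q μ 0 \ matchAt n q (Mfam n q μ 0) 0 := hQ
    rw [Finset.mem_sdiff] at hQ'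
    obtain ⟨hQ0, hnotin⟩ := hQ'
    have hne : (Q ∩ Cfam n q μ 0).card ≠ q - 0 := by
      intro h
      exact hnotin (Finset.mem_filter.2 ⟨hQ0, h⟩)
    have hcardQ : Q.card = q := by
      have h0 : 0 < μ Q := by
        have := hQ0
        simp only [Mfam, distSupp, Finset.mem_filter, Finset.mem_univ, true_and] at this
        exact this
      exact hcard Q h0
    have hle : (Q ∩ Cfam n q μ 0).card ≤ q := by
      calc (Q ∩ Cfam n q μ 0).card ≤ Q.card := Finset.card_le_card Finset.inter_subset_left
        _ = q := hcardQ
    omega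
  | succ i ih =>
    intro Q hQ
    have hQ' : Q ∈ Mfam n q μ (i+1) \ matchAt n q (Mfam n q μ (i+1)) (i+1) := hQ
    rw [Finset.mem_sdiff] at hQ'
    obtain ⟨hQ1, hnotin⟩ := hQ'
    have hne' : (Q ∩ Cfam n q μ (i+1)).card ≠ q - (i+1) := by
      intro h
      exact hnotin (Finset.mem_filter.2 ⟨hQ1, h⟩)
    have h1 : (Q ∩ Cfam n q μ (i+1)).card ≤ (Q ∩ Cfam n q μ i).card :=
      Finset.card_le_card (Finset.inter_subset_inter (subset_refl Q)
        (Cfam_succ_subset hq μ i))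
    have h2 := ih Q hQ1
    omega

/-- For every `1 ≤ i ≤ q` and every `Q ∈ 𝓢_i`,
`(Q ∖ 𝓒_i) ∩ 𝓒_{i-1} = ∅`. -/
theorem stmt11 {n q : ℕ} (η : ℝ) (hq : 0 < q)
    (μ : Finset (Fin n) → ℝ) (hμ : IsDistr μ)
    (hcard : ∀ Q, 0 < μ Q → Q.card = q)
    (hsupp : ((distSupp μ).card : ℝ) ≤ η * n) :
    ∀ i : ℕ, 1 ≤ i → i ≤ q → ∀ Q ∈ Sfam n q μ i,
      (Q \ Cfam n q μ i) ∩ Cfam n q μ (i-1) = ∅ := by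
  intro i h1 hiq Q hQ
  obtain ⟨k, rfl⟩ : ∃ k, i = k + 1 := ⟨i - 1, by omega⟩
  simp only [Sfam, matchAt, Finset.mem_filter] at hQ
  obtain ⟨hQM, hQc⟩ := hQ
  have hle := key_bound hq μ hcard k Q hQM
  have hsub : Q ∩ Cfam n q μ (k+1) ⊆ Q ∩ Cfam n q μ k :=
    Finset.inter_subset_inter (subset_refl Q) (Cfam_succ_subset hq μ k)
  have heq : Q ∩ Cfam n q μ (k+1) = Q ∩ Cfam n q μ k := by
    apply Finset.eq_of_subset_of_card_le hsub
    exact le_trans hle hQc.symm.le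
  ext j
  simp only [Finset.mem_inter, Finset.mem_sdiff, Finset.notMem_empty, iff_false,
    not_and]
  rintro ⟨hjQ, hjC⟩ hjC'
  have : j ∈ Q ∩ Cfam n q μ (k+1) := by
    rw [heq]
    exact Finset.mem_inter.2 ⟨hjQ, by simpa using hjC'⟩
  exact hjC (Finset.mem_inter.1 this).2
end
end
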